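/- Define g(ν) = ν·( (1/2) log 5 − f(ν) ) where f(ν) = sup_{2/(ν+1) ≤ b ≤ 1} κ(bν, 1−b). Then lim_{ν→∞} g(ν) = (1/2) log(9/5). -/

import Mathlib

open Filter

noncomputable def fab (a b : ℝ) (p : ℝ × ℝ) : ℝ :=
  b * Real.log b - 2 * p.1 * Real.log p.1
    + ((a + 1 - b) / 2) * Real.log ((a + 1 - b) / 2)
    - ((a + 1 - b) / 2 - p.1) * Real.log ((a + 1 - b) / 2 - p.1)
    - 2 * p.2 * Real.log p.2
    - (b - p.1 - p.2) * Real.log (b - p.1 - p.2)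
    + ((a - 1 - b) / 2) * Real.log ((a - 1 - b) / 2)
    - ((a - 1 - b) / 2 - p.2) * Real.log ((a - 1 - b) / 2 - p.2)

/-- The domain `D_{a,b}` of `f_{a,b}`. -/
def Dab (a b : ℝ) : Set (ℝ × ℝ) :=
  {p | 0 ≤ p.1 ∧ 0 ≤ p.2 ∧ p.1 + p.2 ≤ b ∧ p.1 ≤ (a + 1 - b) / 2 ∧ p.2 ≤ (a - 1 - b) / 2}

/-- The entropy per step `κ(a,b) = (1/a) · sup_{(δ,ε) ∈ D_{a,b}} f_{a,b}(δ,ε)`. -/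
noncomputable def kappa (a b : ℝ) : ℝ := (1 / a) * sSup (fab a b '' Dab a b)

/-- `f(ν) = sup_{2/(ν+1) ≤ b ≤ 1} κ(bν, 1−b)`. -/
noncomputable def fnu (ν : ℝ) : ℝ :=
  sSup ((fun b : ℝ => kappa (b * ν) (1 - b)) '' Set.Icc (2 / (ν + 1)) 1)

/-- `g(ν) = ν·((1/2) log 5 − f(ν))`. -/
noncomputable def gnu (ν : ℝ) : ℝ := ν * ((1 / 2) * Real.log 5 - fnu ν)

/-!
Upper bound: each of the three entropy blocks of `f_{a,b}` is bounded by Gibbs' inequality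
against the distributions `(2/5, 3/5)`, `(2/3, 1/3)` and `(1/2, 1/6, 1/3)`, those of the maximiser
`(δ, ε) = (1/2, 1/6)` of `f_{5/2,1}`. Then `δ` and `ε` cancel and
`f_{a,b} ≤ (a/2) log 5 - ((1-b)/2) log (9/5)` on all of `D_{a,b}`, whence
`f(ν) ≤ (1/2) log 5 - log (9/5) / (2ν)` and `g(ν) ≥ (1/2) log (9/5)`.

Lower bound: the choice `b = t = 5/(2ν)` makes the first argument of `κ` equal to `5/2`, and the
point `(1/2, 1/6)` gives `g(ν) ≤ (φ 1 - φ (1 - t)) / t` with `φ β = f_{5/2,β}(1/2, 1/6)`.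
Since `f_{5/2,1}(1/2, 1/6) = (5/4) log 5` and `φ'(1) = (1/2) log (9/5)`, this difference
quotient tends to `(1/2) log (9/5)`.
-/

open Real Finset Topology

lemma mul_log_sub_mul_log_le {x c : ℝ} (hx : 0 ≤ x) (hc : 0 < c) :
    x * log c - x * log x ≤ c - x := by
  rcases hx.eq_or_lt with rfl | hx
  · simpa using hc.le
  · have h := mul_le_mul_of_nonneg_left (log_le_sub_one_of_pos (div_pos hc hx)) hx.le
    rwa [log_div hc.ne' hx.ne', mul_sub, mul_sub, mul_div_cancel₀ _ hx.ne', mul_one] at h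

lemma mul_log_sub_sum_mul_log_le {ι : Type*} (s : Finset ι) {x c : ι → ℝ} {S : ℝ}
    (hx : ∀ i ∈ s, 0 ≤ x i) (hxS : ∑ i ∈ s, x i = S) (hc : ∀ i ∈ s, 0 < c i)
    (hc₁ : ∑ i ∈ s, c i = 1) :
    S * log S - ∑ i ∈ s, x i * log (x i) ≤ -∑ i ∈ s, x i * log (c i) := by
  subst hxS
  rcases (sum_nonneg hx).eq_or_lt with hS₀ | hS₀
  · have hx₀ := (sum_eq_zero_iff_of_nonneg hx).1 hS₀.symm
    have h₁ : ∑ i ∈ s, x i * log (x i) = 0 :=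
      sum_eq_zero fun i hi => by rw [hx₀ i hi, zero_mul]
    have h₂ : ∑ i ∈ s, x i * log (c i) = 0 :=
      sum_eq_zero fun i hi => by rw [hx₀ i hi, zero_mul]
    simp [← hS₀, h₁, h₂]
  set S := ∑ i ∈ s, x i with hS
  have key := sum_le_sum fun i hi => mul_log_sub_mul_log_le (hx i hi) (mul_pos (hc i hi) hS₀)
  simp only [sum_sub_distrib, ← sum_mul, hc₁, one_mul] at key
  have hsplit : ∑ i ∈ s, x i * log (c i * S) = ∑ i ∈ s, x i * log (c i) + S * log S := by
    rw [hS, sum_mul, ← sum_add_distrib]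
    exact sum_congr rfl fun i hi => by rw [log_mul (hc i hi).ne' hS₀.ne', mul_add]
  linarith

theorem HasDerivAt.mul_log {f : ℝ → ℝ} {f' x : ℝ} (hf : HasDerivAt f f' x)
    (hx : f x ≠ 0) :
    HasDerivAt (fun y => f y * Real.log (f y)) ((Real.log (f x) + 1) * f') x :=
  (hasDerivAt_mul_log hx).comp x hf

lemma log_four : log 4 = 2 * log 2 := by
  rw [show (4 : ℝ) = 2 ^ 2 by norm_num, log_pow, Nat.cast_ofNat]

lemma log_six : log 6 = log 2 + log 3 := by
  rw [← log_mul two_ne_zero three_ne_zero]; norm_num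

lemma log_nine : log 9 = 2 * log 3 := by
  rw [show (9 : ℝ) = 3 ^ 2 by norm_num, log_pow, Nat.cast_ofNat]

lemma log_twelve : log 12 = 2 * log 2 + log 3 := by
  rw [show (12 : ℝ) = 2 ^ 2 * 3 by norm_num, log_mul (by norm_num) three_ne_zero, log_pow,
    Nat.cast_ofNat]

lemma fab_le {a b : ℝ} {p : ℝ × ℝ} (hp : p ∈ Dab a b) :
    fab a b p ≤ a / 2 * log 5 - (1 - b) / 2 * log (9 / 5) := by
  obtain ⟨δ, ε⟩ := p
  obtain ⟨hδ, hε, hδε, hδ₁, hε₁⟩ := hp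
  have hρ : 0 ≤ b - δ - ε := by linarith
  have h₁ := mul_log_sub_sum_mul_log_le univ (x := ![δ, (a + 1 - b) / 2 - δ])
    (S := (a + 1 - b) / 2) (c := ![2 / 5, 3 / 5]) (by simp [Fin.forall_fin_two, hδ, hδ₁])
    (by simp) (by simp [Fin.forall_fin_two]) (by norm_num [Fin.sum_univ_two])
  have h₂ := mul_log_sub_sum_mul_log_le univ (x := ![ε, (a - 1 - b) / 2 - ε])
    (S := (a - 1 - b) / 2) (c := ![2 / 3, 1 / 3]) (by simp [Fin.forall_fin_two, hε, hε₁])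
    (by simp) (by simp [Fin.forall_fin_two]) (by norm_num [Fin.sum_univ_two])
  have h₃ := mul_log_sub_sum_mul_log_le univ (x := ![δ, ε, b - δ - ε])
    (S := b) (c := ![1 / 2, 1 / 6, 1 / 3]) (by simp [Fin.forall_fin_succ, hδ, hε, hρ])
    (by simp [Fin.sum_univ_succ]) (by simp [Fin.forall_fin_succ]) (by norm_num [Fin.sum_univ_succ])
  simp only [Fin.sum_univ_two, Fin.sum_univ_three, Matrix.cons_val_zero, Matrix.cons_val_one,
    Matrix.cons_val_two, Matrix.head_cons, Matrix.tail_cons] at h₁ h₂ h₃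
  simp only [one_div, log_inv, log_div, ne_eq, OfNat.ofNat_ne_zero, not_false_eq_true, log_six,
    log_nine] at h₁ h₂ h₃ ⊢
  unfold fab
  linear_combination h₁ + h₂ + h₃

lemma hasDerivAt_fab_snd {a b : ℝ} {p : ℝ × ℝ} (hb : b ≠ 0) (hbp : b - p.1 - p.2 ≠ 0)
    (h₁ : (a + 1 - b) / 2 ≠ 0) (h₁p : (a + 1 - b) / 2 - p.1 ≠ 0)
    (h₂ : (a - 1 - b) / 2 ≠ 0) (h₂p : (a - 1 - b) / 2 - p.2 ≠ 0) :
    HasDerivAt (fun β => fab a β p)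
      (log b - log (b - p.1 - p.2) + (log ((a + 1 - b) / 2 - p.1) - log ((a + 1 - b) / 2)
        + log ((a - 1 - b) / 2 - p.2) - log ((a - 1 - b) / 2)) / 2) b := by
  have hid := hasDerivAt_id b
  have e₁ : HasDerivAt (fun β => (a + 1 - β) / 2) (-1 / 2) b := (hid.const_sub _).div_const 2
  have e₂ : HasDerivAt (fun β => (a - 1 - β) / 2) (-1 / 2) b := (hid.const_sub _).div_const 2
  have H := (((((((hid.mul_log hb).sub_const (2 * p.1 * log p.1)).add (e₁.mul_log h₁)).sub
    ((e₁.sub_const p.1).mul_log h₁p)).sub_const (2 * p.2 * log p.2)).sub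
    (((hid.sub_const p.1).sub_const p.2).mul_log hbp)).add (e₂.mul_log h₂)).sub
    ((e₂.sub_const p.2).mul_log h₂p)
  exact H.congr_deriv (by simp only [id_eq]; ring)

lemma div_le_kappa {a b : ℝ} {p : ℝ × ℝ} (ha : 0 ≤ a) (hp : p ∈ Dab a b) :
    fab a b p / a ≤ kappa a b := by
  have hbdd : BddAbove (fab a b '' Dab a b) :=
    ⟨_, Set.forall_mem_image.2 fun _ hq => fab_le hq⟩
  rw [kappa, div_eq_inv_mul, one_div]
  exact mul_le_mul_of_nonneg_left (le_csSup hbdd (Set.mem_image_of_mem _ hp)) (inv_nonneg.2 ha)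

lemma kappa_le {a b : ℝ} (ha : 0 < a) (hb : 0 ≤ b) (hab : b + 1 ≤ a) :
    kappa a b ≤ 1 / 2 * log 5 - (1 - b) / (2 * a) * log (9 / 5) := by
  have h₀ : ((0 : ℝ), (0 : ℝ)) ∈ Dab a b := by
    refine ⟨le_rfl, le_rfl, ?_, ?_, ?_⟩ <;> dsimp only <;> linarith
  have hsup : sSup (fab a b '' Dab a b) ≤ a / 2 * log 5 - (1 - b) / 2 * log (9 / 5) :=
    csSup_le ⟨_, Set.mem_image_of_mem _ h₀⟩ (Set.forall_mem_image.2 fun _ hp => fab_le hp)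
  calc kappa a b ≤ 1 / a * (a / 2 * log 5 - (1 - b) / 2 * log (9 / 5)) :=
        mul_le_mul_of_nonneg_left hsup (by positivity)
    _ = 1 / 2 * log 5 - (1 - b) / (2 * a) * log (9 / 5) := by field_simp

lemma kappa_mul_le {ν b : ℝ} (hν : 1 ≤ ν) (hb : b ∈ Set.Icc (2 / (ν + 1)) 1) :
    kappa (b * ν) (1 - b) ≤ 1 / 2 * log 5 - 1 / (2 * ν) * log (9 / 5) := by
  obtain ⟨hb₁, hb₂⟩ := hb
  have hb₀ : 0 < b := (div_pos two_pos (by linarith)).trans_le hb₁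
  have hbν : 2 ≤ b * (ν + 1) := (div_le_iff₀ (by linarith)).1 hb₁
  convert kappa_le (a := b * ν) (b := 1 - b) (by positivity) (sub_nonneg.2 hb₂) (by linarith)
    using 3
  field_simp
  ring

lemma kappa_mul_le_fnu {ν b : ℝ} (hν : 1 ≤ ν) (hb : b ∈ Set.Icc (2 / (ν + 1)) 1) :
    kappa (b * ν) (1 - b) ≤ fnu ν :=
  le_csSup ⟨_, Set.forall_mem_image.2 fun _ hb' => kappa_mul_le hν hb'⟩
    (Set.mem_image_of_mem _ hb)

lemma le_gnu {ν : ℝ} (hν : 1 ≤ ν) : 1 / 2 * log (9 / 5) ≤ gnu ν := by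
  have hne : (1 : ℝ) ∈ Set.Icc (2 / (ν + 1)) 1 :=
    ⟨(div_le_one (by linarith)).2 (by linarith), le_rfl⟩
  have hfnu : fnu ν ≤ 1 / 2 * log 5 - 1 / (2 * ν) * log (9 / 5) :=
    csSup_le ⟨_, Set.mem_image_of_mem _ hne⟩
      (Set.forall_mem_image.2 fun _ hb => kappa_mul_le hν hb)
  calc 1 / 2 * log (9 / 5) = ν * (1 / (2 * ν) * log (9 / 5)) := by field_simp
    _ ≤ gnu ν := mul_le_mul_of_nonneg_left (by linarith) (by linarith)

lemma fab_five_halves_one : fab (5 / 2) 1 (1 / 2, 1 / 6) = 5 / 4 * log 5 := by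
  norm_num [fab]
  simp only [one_div, log_inv, log_div, ne_eq, OfNat.ofNat_ne_zero, not_false_eq_true, log_four,
    log_six, log_twelve]
  ring

lemma hasDerivAt_fab_five_halves :
    HasDerivAt (fun β => fab (5 / 2) β (1 / 2, 1 / 6)) (1 / 2 * log (9 / 5)) 1 := by
  convert hasDerivAt_fab_snd (a := 5 / 2) (p := (1 / 2, 1 / 6)) one_ne_zero
    (by norm_num) (by norm_num) (by norm_num) (by norm_num) (by norm_num) using 1
  norm_num
  simp only [one_div, log_inv, log_div, ne_eq, OfNat.ofNat_ne_zero, not_false_eq_true, log_four,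
    log_nine, log_twelve]
  ring

lemma gnu_le_slope {ν : ℝ} (hν : 15 / 2 ≤ ν) :
    gnu ν ≤ slope (fun β => fab (5 / 2) β (1 / 2, 1 / 6)) 1 (1 - 5 / 2 / ν) := by
  set t := 5 / 2 / ν with ht
  have hν₀ : 0 < ν := by linarith
  have htν : t * ν = 5 / 2 := by rw [ht]; field_simp
  have ht₀ : 0 < t := by positivity
  have ht₁ : t ≤ 1 / 3 := by rw [ht, div_le_iff₀ hν₀]; linarith
  have hmem : ((1 : ℝ) / 2, (1 : ℝ) / 6) ∈ Dab (5 / 2) (1 - t) := by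
    refine ⟨?_, ?_, ?_, ?_, ?_⟩ <;> dsimp only <;> linarith
  have htI : t ∈ Set.Icc (2 / (ν + 1)) 1 := by
    constructor
    · rw [ht, div_le_div_iff₀ (by linarith) hν₀]; linarith
    · linarith
  have hfnu : fab (5 / 2) (1 - t) (1 / 2, 1 / 6) / (5 / 2) ≤ fnu ν :=
    (div_le_kappa (by norm_num) hmem).trans (htν ▸ kappa_mul_le_fnu (by linarith) htI)
  calc gnu ν ≤ ν * (1 / 2 * log 5 - fab (5 / 2) (1 - t) (1 / 2, 1 / 6) / (5 / 2)) :=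
        mul_le_mul_of_nonneg_left (by linarith) hν₀.le
    _ = slope (fun β => fab (5 / 2) β (1 / 2, 1 / 6)) 1 (1 - t) := by
        rw [slope_def_field, fab_five_halves_one, ht]
        field_simp
        ring

lemma tendsto_sub_div_atTop_nhdsNE (x₀ : ℝ) {c : ℝ} (hc : c ≠ 0) :
    Tendsto (fun x => x₀ - c / x) atTop (𝓝[≠] x₀) := by
  refine tendsto_nhdsWithin_iff.2 ⟨?_, ?_⟩
  · simpa using tendsto_const_nhds.sub ((tendsto_const_nhds (x := c)).div_atTop tendsto_id)
  · filter_upwards [eventually_gt_atTop 0] with x hx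
    simpa using div_ne_zero hc hx.ne'

/-- `lim_{ν→∞} g(ν) = (1/2) log(9/5)`. -/
theorem stmt13 : Tendsto gnu atTop (nhds ((1 / 2) * Real.log (9 / 5))) := by
  have hslope := (hasDerivAt_iff_tendsto_slope.1 hasDerivAt_fab_five_halves).comp
    (tendsto_sub_div_atTop_nhdsNE 1 (by norm_num : (5 : ℝ) / 2 ≠ 0))
  refine tendsto_of_tendsto_of_tendsto_of_le_of_le' tendsto_const_nhds hslope ?_ ?_
  · filter_upwards [eventually_ge_atTop 1] with ν hν using le_gnu hν
  · filter_upwards [eventually_ge_atTop (15 / 2)] with ν hν using gnu_le_slope hν
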